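/- arXiv:1011.2374 — 3 statements merged into one kernel-verified Lean document; each statement's English description precedes it below -/
import Mathlib

section
/- Let p : M → B and q : E → B be Grothendieck fibrations and U : M → E a morphism of fibrations over B (i.e. q ∘ U = p and U sends cartesian morphisms to cartesian morphisms). Let O ∈ B, let X be an object of E with q(X) = O, let M₀ be an object of M with p(M₀) = O, and let η : X → U(M₀) be a vertical morphism (one mapping to the identity of O). Then η is a universal arrow from X to U (for every M' ∈ M and every g : X → U(M') there is a unique h : M₀ → M' with U(h) ∘ η = g) if and only if η is a universal arrow from X to the restriction of U to the fibers over O (the same condition quantified only over M' in the fiber of p over O and g vertical). -/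
/-!
# Statement 2

For a morphism of fibrations `U : M ⥤ E` over `B`, a vertical arrow `η : X ⟶ U M₀`
(with `X`, `M₀` in the fibers over `O`) is a universal arrow from `X` to `U` if and only
if it is a universal arrow from `X` to the restriction of `U` to the fibers over `O`.
-/

open CategoryTheory

universe v₁ v₂ v₃ u₁ u₂ u₃

/-- `θ : e' ⟶ e` is cartesian (prone) with respect to `p : E ⥤ B`. -/
def IsCartesianMor {E : Type u₁} [Category.{v₁} E] {B : Type u₂} [Category.{v₂} B]
    (p : E ⥤ B) {e' e : E} (θ : e' ⟶ e) : Prop :=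
  ∀ (e'' : E) (g : e'' ⟶ e) (v : p.obj e'' ⟶ p.obj e'),
    p.map g = v ≫ p.map θ → ∃! h : e'' ⟶ e', p.map h = v ∧ h ≫ θ = g

/-- `p : E ⥤ B` is a Grothendieck fibration. -/
def IsGrothendieckFibration {E : Type u₁} [Category.{v₁} E] {B : Type u₂} [Category.{v₂} B]
    (p : E ⥤ B) : Prop :=
  ∀ (e : E) (b : B) (u : b ⟶ p.obj e),
    ∃ (e' : E) (θ : e' ⟶ e) (hb : p.obj e' = b),
      p.map θ = eqToHom hb ≫ u ∧ IsCartesianMor p θ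

/-- **Statement 2.** Universal arrows to a morphism of fibrations can be detected
fiberwise. -/
theorem universal_iff_universal_in_fiber
    {M : Type u₁} [Category.{v₁} M] {E : Type u₂} [Category.{v₂} E]
    {B : Type u₃} [Category.{v₃} B]
    (p : M ⥤ B) (q : E ⥤ B) (hp : IsGrothendieckFibration p)
    (hq : IsGrothendieckFibration q)
    (U : M ⥤ E) (hU : U ⋙ q = p)
    (hUcart : ∀ {m m' : M} (θ : m ⟶ m'), IsCartesianMor p θ → IsCartesianMor q (U.map θ))
    (O : B) (X : E) (hX : q.obj X = O) (M₀ : M) (hM₀ : p.obj M₀ = O)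
    (η : X ⟶ U.obj M₀)
    (hη : q.map η =
      eqToHom (hX.trans ((Functor.congr_obj hU M₀).trans hM₀).symm)) :
    (∀ (M' : M) (g : X ⟶ U.obj M'), ∃! h : M₀ ⟶ M', η ≫ U.map h = g) ↔
      (∀ (M' : M) (hM' : p.obj M' = O) (g : X ⟶ U.obj M'),
        q.map g = eqToHom (hX.trans ((Functor.congr_obj hU M').trans hM').symm) →
        ∃! h : M₀ ⟶ M', p.map h = eqToHom (hM₀.trans hM'.symm) ∧ η ≫ U.map h = g) := by
  have e : ∀ m : M, q.obj (U.obj m) = p.obj m := fun m => Functor.congr_obj hU m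
  have eh : ∀ {m m' : M} (f : m ⟶ m'),
      q.map (U.map f) = eqToHom (e m) ≫ p.map f ≫ eqToHom (e m').symm := by
    intro m m' f
    have := Functor.congr_hom hU f
    simp only [Functor.comp_map] at this
    rw [this]
  constructor
  · intro H M' hM' g hg
    obtain ⟨h, hh, huniq⟩ := H M' g
    refine ⟨h, ⟨?_, hh⟩, fun h' hh' => huniq h' hh'.2⟩
    have := congrArg q.map hh
    rw [q.map_comp, hη, eh, hg] at this
    have : p.map h = eqToHom (e M₀).symm ≫ eqToHom (hX.trans ((e M₀).trans hM₀).symm).symm ≫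
        eqToHom (hX.trans ((e M').trans hM').symm) ≫ eqToHom (e M') := by
      rw [← this]; simp
    rw [this]; simp
  · intro H M' g
    set u : O ⟶ p.obj M' := eqToHom hX.symm ≫ q.map g ≫ eqToHom (e M') with hu
    obtain ⟨M'', θ, hb, hθ, hcart⟩ := hp M' O u
    have hUθ := hUcart θ hcart
    have hv : q.map g = eqToHom (hX.trans (hb.symm.trans (e M'').symm)) ≫ q.map (U.map θ) := by
      rw [eh, hθ, hu]; simp
    obtain ⟨g', ⟨hg'v, hg'c⟩, hg'uniq⟩ := hUθ X g _ hv
    obtain ⟨h₀, ⟨hh₀v, hh₀c⟩, hh₀uniq⟩ := H M'' hb g' (by rw [hg'v])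
    refine ⟨h₀ ≫ θ, ?_, ?_⟩
    · show η ≫ U.map (h₀ ≫ θ) = g
      rw [U.map_comp, ← Category.assoc, hh₀c, hg'c]
    · intro h' hh''
      have hh' : η ≫ U.map h' = g := hh''
      have key : p.map h' = eqToHom (hM₀.trans hb.symm) ≫ p.map θ := by
        have h1 := congrArg q.map hh'
        rw [q.map_comp, hη, eh] at h1
        have h2 : p.map h' = eqToHom (e M₀).symm ≫
            eqToHom (hX.trans ((e M₀).trans hM₀).symm).symm ≫ q.map g ≫ eqToHom (e M') := by
          rw [← h1]; simp
        rw [h2, hθ, hu]; simp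
      obtain ⟨k, ⟨hkv, hkc⟩, _⟩ := hcart M₀ h' _ key
      have hk0 : η ≫ U.map k = g' := by
        refine hg'uniq _ ⟨?_, by rw [Category.assoc, ← U.map_comp, hkc, hh']⟩
        rw [q.map_comp, hη, eh, hkv]; simp
      have hkh : k = h₀ := hh₀uniq k ⟨hkv, hk0⟩
      rw [← hkc, hkh]
end

section
/- Let (C, ⊗, I) be a monoidal category with finite coproducts and small filtered colimits such that ⊗ preserves filtered colimits in both variables and binary coproducts in the left variable, and let (X∞, μ, η) be the free monoid on X ∈ C constructed as the colimit of X₀ = I, X_{n+1} = I ⨿ (X ⊗ X_n). For m ≥ 1, using the isomorphisms X_m ≅ I ⨿ (X ⊗ X_{m-1}) and X₁ ⊗ X_{m-1} ≅ X_{m-1} ⨿ ((X ⊗ I) ⊗ X_{m-1}) ≅ X_{m-1} ⨿ (X ⊗ X_{m-1}), define s_m : X_m → X₁ ⊗ X_{m-1} as i_{0,m-1} ⨿ id_{X⊗X_{m-1}}. Then μ_{1,m-1} ∘ s_m = id_{X_m}, the s_m are compatible with the connecting maps, their colimit s : X∞ → X₁ ⊗ X∞ satisfies μ_{1,∞} ∘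 s = id, and ŝ = (i_{1,∞} ⊗ id) ∘ s : X∞ → X∞ ⊗ X∞ is a section of the free multiplication: μ ∘ ŝ = id_{X∞}. -/
open CategoryTheory CategoryTheory.Limits MonoidalCategory

universe v u

variable {C : Type u} [Category.{v} C] [MonoidalCategory C]

section FreeMonoidConstruction

variable [HasBinaryCoproducts C]

/-- The stages of the free monoid construction: `X₀ = I`, `X_{n+1} = I ⨿ (A ⊗ Xₙ)`. -/
noncomputable def freeStage (A : C) : ℕ → C
  | 0 => 𝟙_ C
  | n + 1 => (𝟙_ C) ⨿ (A ⊗ freeStage A n)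

/-- The connecting maps `iₙ : Xₙ ⟶ X_{n+1}`. -/
noncomputable def freeConn (A : C) : ∀ n, freeStage A n ⟶ freeStage A (n + 1)
  | 0 => coprod.inl
  | n + 1 => coprod.map (𝟙 _) (A ◁ freeConn A n)

/-- The chain `X₀ ⟶ X₁ ⟶ X₂ ⟶ ⋯`. -/
noncomputable def freeChain (A : C) : ℕ ⥤ C := Functor.ofSequence (freeConn A)

/-- The composite connecting maps `i_{m,k} : X_m ⟶ X_k`. -/
noncomputable def freeConnTo (A : C) {m k : ℕ} (h : m ≤ k) :
    freeStage A m ⟶ freeStage A k :=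
  (freeChain A).map (homOfLE h)

variable [∀ Y : C, PreservesColimitsOfShape (Discrete WalkingPair) (tensorRight Y)]

/-- The partial multiplications `μ_{n,m} : Xₙ ⊗ Xₘ ⟶ X_{n+m}`, defined by
`μ_{0,m} = λ` and `μ_{n+1,m} = (i_{m,n+1+m}, j ∘ (1 ⊗ μ_{n,m}))` through the
isomorphism `X_{n+1} ⊗ Xₘ ≅ Xₘ ⨿ ((A ⊗ Xₙ) ⊗ Xₘ)`. -/
noncomputable def freeMulAux (A : C) : ∀ n m, freeStage A n ⊗ freeStage A m ⟶ freeStage A (n + m)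
  | 0, m => (λ_ (freeStage A m)).hom ≫ eqToHom (congrArg (freeStage A) (Nat.zero_add m).symm)
  | n + 1, m =>
    inv (Y := ((𝟙_ C) ⨿ (A ⊗ freeStage A n)) ⊗ freeStage A m)
      (coprodComparison (tensorRight (freeStage A m)) (𝟙_ C) (A ⊗ freeStage A n)) ≫
      coprod.desc
        ((λ_ (freeStage A m)).hom ≫ freeConnTo A (Nat.le_add_left m (n + 1)))
        ((α_ A (freeStage A n) (freeStage A m)).hom ≫ (A ◁ freeMulAux A n m) ≫
          (coprod.inr : A ⊗ freeStage A (n + m) ⟶ freeStage A (n + m + 1)) ≫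
          eqToHom (congrArg (freeStage A) (by omega : n + m + 1 = n + 1 + m)))

variable [HasColimitsOfShape ℕ C]

/-- The universe `X∞` of the free monoid on `A`. -/
noncomputable def freeUniverse (A : C) : C := colimit (freeChain A)

/-- The canonical maps `i_{n,∞} : Xₙ ⟶ X∞`. -/
noncomputable def freeι (A : C) (n : ℕ) : freeStage A n ⟶ freeUniverse A :=
  colimit.ι (freeChain A) n

/-- The unit `η : I = X₀ ⟶ X∞` of the free monoid. -/
noncomputable def freeUnit (A : C) : 𝟙_ C ⟶ freeUniverse A := freeι A 0

/-- The universal arrow `A ⟶ X∞` of the free monoid adjunction. -/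
noncomputable def freeGen (A : C) : A ⟶ freeUniverse A :=
  (ρ_ A).inv ≫ (coprod.inr : A ⊗ freeStage A 0 ⟶ freeStage A 1) ≫ freeι A 1

/-- The stages `fₙ : Xₙ(A) ⟶ Xₙ(B)` of the free monoid construction on a morphism. -/
noncomputable def freeStageMap {A B : C} (f : A ⟶ B) :
    ∀ n, freeStage A n ⟶ freeStage B n
  | 0 => 𝟙 _
  | n + 1 => coprod.map (𝟙 _) (f ⊗ₘ freeStageMap f n)

end FreeMonoidConstruction


section Sections

variable [HasBinaryCoproducts C]
  [∀ Y : C, PreservesColimitsOfShape (Discrete WalkingPair) (tensorRight Y)]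

/-- The canonical sections `s_{m+1} : X_{m+1} ⟶ X₁ ⊗ Xₘ`, defined through the
isomorphisms `X_{m+1} ≅ I ⨿ (A ⊗ Xₘ)` and `X₁ ⊗ Xₘ ≅ Xₘ ⨿ (A ⊗ Xₘ)` as
`i_{0,m} ⨿ 𝟙`. -/
noncomputable def freeSec (A : C) (m : ℕ) : freeStage A (m + 1) ⟶ freeStage A 1 ⊗ freeStage A m :=
  coprod.desc
    (freeConnTo A (Nat.zero_le m) ≫ (λ_ (freeStage A m)).inv ≫
      ((coprod.inl : 𝟙_ C ⟶ freeStage A 1) ▷ freeStage A m))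
    (((ρ_ A).inv ▷ freeStage A m) ≫
      ((coprod.inr : A ⊗ freeStage A 0 ⟶ freeStage A 1) ▷ freeStage A m))

end Sections

/-!
Every map between stages that the construction produces is a connecting map `i_{a,b}`
(including each `eqToHom` along an equation of indices), so once `X_{n+1} ⊗ Y` is split as
`Y ⨿ ((A ⊗ Xₙ) ⊗ Y)`, the identities reduce to `i_{b,c} ∘ i_{a,b} = i_{a,c}`. On the summand
`I` of `X_{m+1}`, `μ_{1,m} ∘ s_{m+1}` is `i_{0,m}` composed with `λ⁻¹` and `λ`; on `A ⊗ Xₘ` it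
is `(A ◁ λ) ∘ α ∘ (ρ⁻¹ ▷ Xₘ)`, the identity by the triangle axiom. The same splitting shows that
`μ_{n,m}` is natural in both variables, so it passes to the colimits `μ_{n,∞}` and `μ`, and
`μ_{1,∞} ∘ s = 𝟙` can be checked on each stage.
-/

section Stages

variable [HasBinaryCoproducts C] (A : C)

/- Typed through `freeStage`, so that rewriting does not depend on unfolding `freeStage A (n + 1)`
to the coproduct. `freeStage A 0` is `𝟙_ C` only up to unfolding as well, which is why a few
rewrites below need `erw`. -/
noncomputable def freeStageInl (n : ℕ) : 𝟙_ C ⟶ freeStage A (n + 1) := coprod.inl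

noncomputable def freeStageInr (n : ℕ) : A ⊗ freeStage A n ⟶ freeStage A (n + 1) := coprod.inr

variable {A} in
theorem freeStage_succ_hom_ext {n : ℕ} {Z : C} {f g : freeStage A (n + 1) ⟶ Z}
    (hl : freeStageInl A n ≫ f = freeStageInl A n ≫ g)
    (hr : freeStageInr A n ≫ f = freeStageInr A n ≫ g) : f = g :=
  coprod.hom_ext hl hr

theorem freeConnTo_comp {a b c : ℕ} (hab : a ≤ b) (hbc : b ≤ c) :
    freeConnTo A hab ≫ freeConnTo A hbc = freeConnTo A (hab.trans hbc) :=
  ((freeChain A).map_comp _ _).symm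

theorem freeConnTo_comp_assoc {a b c : ℕ} (hab : a ≤ b) (hbc : b ≤ c) {Z : C}
    (f : freeStage A c ⟶ Z) :
    freeConnTo A hab ≫ freeConnTo A hbc ≫ f = freeConnTo A (hab.trans hbc) ≫ f := by
  rw [← Category.assoc, freeConnTo_comp]

@[simp]
theorem freeConnTo_self {a : ℕ} (h : a ≤ a) : freeConnTo A h = 𝟙 _ :=
  (freeChain A).map_id a

theorem eqToHom_eq_freeConnTo {a b : ℕ} (h : a = b) :
    eqToHom (congrArg (freeStage A) h) = freeConnTo A h.le := by
  subst h; simp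

theorem freeConn_eq_freeConnTo (n : ℕ) : freeConn A n = freeConnTo A n.le_succ :=
  (Functor.ofSequence_map_homOfLE_succ _ n).symm

theorem freeStageInl_freeConnTo {a b : ℕ} (h : a ≤ b) :
    freeStageInl A a ≫ freeConnTo A (Nat.succ_le_succ h) = freeStageInl A b := by
  induction b, h using Nat.le_induction with
  | base => simp
  | succ b hab ih =>
    rw [← freeConnTo_comp A (Nat.succ_le_succ hab) (b + 1).le_succ, reassoc_of% ih,
      ← freeConn_eq_freeConnTo]
    exact coprod.inl_map _ _ |>.trans (Category.id_comp _)

theorem freeStageInr_freeConnTo {a b : ℕ} (h : a ≤ b) :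
    freeStageInr A a ≫ freeConnTo A (Nat.succ_le_succ h) =
      (A ◁ freeConnTo A h) ≫ freeStageInr A b := by
  induction b, h using Nat.le_induction with
  | base => simp
  | succ b hab ih =>
    rw [← freeConnTo_comp A (Nat.succ_le_succ hab) (b + 1).le_succ, reassoc_of% ih,
      ← freeConn_eq_freeConnTo, ← freeConnTo_comp A hab b.le_succ, ← freeConn_eq_freeConnTo,
      whiskerLeft_comp, Category.assoc]
    exact congrArg _ (coprod.inr_map _ _)

theorem freeStageInl_eq_freeConnTo (m : ℕ) :
    freeStageInl A m = freeConnTo A (Nat.zero_le (m + 1)) := by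
  induction m with
  | zero => rw [← freeConn_eq_freeConnTo]; rfl
  | succ m ih =>
    rw [← freeConnTo_comp A (Nat.zero_le (m + 1)) (m + 1).le_succ, ← ih]
    exact (freeStageInl_freeConnTo A m.le_succ).symm

theorem freeStageInl_freeSec (m : ℕ) :
    freeStageInl A m ≫ freeSec A m =
      freeConnTo A (Nat.zero_le m) ≫ (λ_ (freeStage A m)).inv ≫
        (freeStageInl A 0 ▷ freeStage A m) :=
  coprod.inl_desc _ _

theorem freeStageInr_freeSec (m : ℕ) :
    freeStageInr A m ≫ freeSec A m =
      ((ρ_ A).inv ▷ freeStage A m) ≫ (freeStageInr A 0 ▷ freeStage A m) :=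
  coprod.inr_desc _ _

theorem freeConnTo_freeSec {k k' : ℕ} (h : k ≤ k') :
    freeConnTo A (Nat.succ_le_succ h) ≫ freeSec A k' =
      freeSec A k ≫ (freeStage A 1 ◁ freeConnTo A h) := by
  apply freeStage_succ_hom_ext
  · rw [reassoc_of% freeStageInl_freeConnTo A h, freeStageInl_freeSec,
      reassoc_of% freeStageInl_freeSec]
    erw [Category.assoc, Category.assoc, ← whisker_exchange, ← leftUnitor_inv_naturality_assoc,
      freeConnTo_comp_assoc]
  · rw [reassoc_of% freeStageInr_freeConnTo A h, freeStageInr_freeSec,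
      reassoc_of% freeStageInr_freeSec]
    erw [Category.assoc, ← whisker_exchange, ← whisker_exchange_assoc]

end Stages

section Multiplication

variable [HasBinaryCoproducts C]
  [∀ Y : C, PreservesColimitsOfShape (Discrete WalkingPair) (tensorRight Y)] (A : C)

variable {A} in
theorem freeStage_succ_whiskerRight_hom_ext {n : ℕ} {Z W : C}
    {f g : freeStage A (n + 1) ⊗ Z ⟶ W}
    (hl : (freeStageInl A n ▷ Z) ≫ f = (freeStageInl A n ▷ Z) ≫ g)
    (hr : (freeStageInr A n ▷ Z) ≫ f = (freeStageInr A n ▷ Z) ≫ g) : f = g :=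
  (isColimitOfPreserves (tensorRight Z) (coprodIsCoprod _ _)).hom_ext <| by
    rintro ⟨⟨⟩⟩
    exacts [hl, hr]

theorem freeMulAux_zero (m : ℕ) :
    freeMulAux A 0 m = (λ_ (freeStage A m)).hom ≫ freeConnTo A (Nat.zero_add m).ge := by
  rw [freeMulAux, eqToHom_eq_freeConnTo A (Nat.zero_add m).symm]
  rfl

theorem freeStageInl_whiskerRight_freeMulAux (n m : ℕ) :
    (freeStageInl A n ▷ freeStage A m) ≫ freeMulAux A (n + 1) m =
      (λ_ (freeStage A m)).hom ≫ freeConnTo A (Nat.le_add_left m (n + 1)) := by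
  change (tensorRight _).map coprod.inl ≫ freeMulAux A (n + 1) m = _
  erw [freeMulAux, map_inl_inv_coprodComparison_assoc, coprod.inl_desc]

theorem freeStageInr_whiskerRight_freeMulAux (n m : ℕ) :
    (freeStageInr A n ▷ freeStage A m) ≫ freeMulAux A (n + 1) m =
      (α_ A (freeStage A n) (freeStage A m)).hom ≫ (A ◁ freeMulAux A n m) ≫
        freeStageInr A (n + m) ≫ freeConnTo A (by omega : n + m + 1 ≤ n + 1 + m) := by
  change (tensorRight _).map coprod.inr ≫ freeMulAux A (n + 1) m = _
  rw [← eqToHom_eq_freeConnTo A (by omega : n + m + 1 = n + 1 + m)]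
  erw [freeMulAux, map_inr_inv_coprodComparison_assoc, coprod.inr_desc]
  rfl

theorem whiskerLeft_freeConnTo_freeMulAux (n : ℕ) {m m' : ℕ} (h : m ≤ m') :
    (freeStage A n ◁ freeConnTo A h) ≫ freeMulAux A n m' =
      freeMulAux A n m ≫ freeConnTo A (Nat.add_le_add_left h n) := by
  induction n with
  | zero =>
    rw [freeMulAux_zero, freeMulAux_zero]
    erw [leftUnitor_naturality_assoc, Category.assoc, freeConnTo_comp, freeConnTo_comp]
    rfl
  | succ n ih =>
    apply freeStage_succ_whiskerRight_hom_ext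
    · rw [← whisker_exchange_assoc, freeStageInl_whiskerRight_freeMulAux,
        reassoc_of% freeStageInl_whiskerRight_freeMulAux, leftUnitor_naturality_assoc,
        freeConnTo_comp, freeConnTo_comp]
    · rw [← whisker_exchange_assoc, freeStageInr_whiskerRight_freeMulAux,
        reassoc_of% freeStageInr_whiskerRight_freeMulAux, associator_naturality_right_assoc,
        ← whiskerLeft_comp_assoc, ih, whiskerLeft_comp_assoc,
        ← reassoc_of% freeStageInr_freeConnTo]
      simp only [freeConnTo_comp]

theorem freeConnTo_whiskerRight_freeMulAux {n n' : ℕ} (h : n ≤ n') (m : ℕ) :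
    (freeConnTo A h ▷ freeStage A m) ≫ freeMulAux A n' m =
      freeMulAux A n m ≫ freeConnTo A (Nat.add_le_add_right h m) := by
  induction n generalizing n' with
  | zero =>
    rcases n' with _ | k
    · simp
    · rw [← freeStageInl_eq_freeConnTo]
      erw [freeStageInl_whiskerRight_freeMulAux, freeMulAux_zero, Category.assoc,
        freeConnTo_comp]
      rfl
  | succ n ih =>
    obtain ⟨k, rfl⟩ : ∃ k, n' = k + 1 := ⟨n' - 1, by omega⟩
    have h' : n ≤ k := by omega
    apply freeStage_succ_whiskerRight_hom_ext
    · rw [← comp_whiskerRight_assoc, freeStageInl_freeConnTo A h',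
        freeStageInl_whiskerRight_freeMulAux, reassoc_of% freeStageInl_whiskerRight_freeMulAux,
        freeConnTo_comp]
    · rw [← comp_whiskerRight_assoc, freeStageInr_freeConnTo A h', comp_whiskerRight_assoc,
        freeStageInr_whiskerRight_freeMulAux, reassoc_of% freeStageInr_whiskerRight_freeMulAux,
        associator_naturality_middle_assoc, ← whiskerLeft_comp_assoc, ih h',
        whiskerLeft_comp_assoc, ← reassoc_of% freeStageInr_freeConnTo]
      simp only [freeConnTo_comp]

theorem freeSec_freeMulAux (m : ℕ) :
    freeSec A m ≫ freeMulAux A 1 m = eqToHom (congrArg (freeStage A) (Nat.add_comm m 1)) := by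
  rw [eqToHom_eq_freeConnTo A (Nat.add_comm m 1)]
  apply freeStage_succ_hom_ext
  · rw [reassoc_of% freeStageInl_freeSec]
    erw [Category.assoc, Category.assoc, freeStageInl_whiskerRight_freeMulAux,
      Iso.inv_hom_id_assoc, freeConnTo_comp, freeStageInl_eq_freeConnTo, freeConnTo_comp]
  · rw [reassoc_of% freeStageInr_freeSec]
    erw [Category.assoc, freeStageInr_whiskerRight_freeMulAux, freeMulAux_zero,
      whiskerLeft_comp_assoc, triangle_assoc_comp_right_inv_assoc, whiskerLeft_inv_hom_assoc,
      ← reassoc_of% freeStageInr_freeConnTo A (Nat.zero_add m).ge, freeConnTo_comp]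

end Multiplication
section Colimits

variable [HasBinaryCoproducts C] [HasColimitsOfShape ℕ C] (A : C)

theorem freeConnTo_freeι {a b : ℕ} (h : a ≤ b) : freeConnTo A h ≫ freeι A b = freeι A a :=
  colimit.w (freeChain A) (homOfLE h)

/- The stage `X_k` is sent through `X_{k+1}`, so that `s_{k+1} ∘ i_{k,k+1}` also covers `k = 0`,
where there is no `s_0`. -/
noncomputable def freeSecColim : freeUniverse A ⟶ freeStage A 1 ⊗ freeUniverse A :=
  colimit.desc (freeChain A)
    { pt := freeStage A 1 ⊗ freeUniverse A
      ι :=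
        { app := fun k => freeConnTo A k.le_succ ≫ freeSec A k ≫ (freeStage A 1 ◁ freeι A k)
          naturality := fun k k' f => by
            show freeConnTo A (leOfHom f) ≫ freeConnTo A k'.le_succ ≫ freeSec A k' ≫
                (freeStage A 1 ◁ freeι A k') =
              (freeConnTo A k.le_succ ≫ freeSec A k ≫ (freeStage A 1 ◁ freeι A k)) ≫
                𝟙 (freeStage A 1 ⊗ freeUniverse A)
            rw [freeConnTo_comp_assoc, Category.comp_id,
              ← freeConnTo_comp_assoc A k.le_succ (Nat.succ_le_succ (leOfHom f)),
              reassoc_of% freeConnTo_freeSec A (leOfHom f), ← whiskerLeft_comp,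
              freeConnTo_freeι] } }

theorem freeι_freeSecColim (k : ℕ) :
    freeι A k ≫ freeSecColim A =
      freeConnTo A k.le_succ ≫ freeSec A k ≫ (freeStage A 1 ◁ freeι A k) :=
  colimit.ι_desc _ k

theorem freeι_succ_freeSecColim (m : ℕ) :
    freeι A (m + 1) ≫ freeSecColim A = freeSec A m ≫ (freeStage A 1 ◁ freeι A m) := by
  rw [freeι_freeSecColim, reassoc_of% freeConnTo_freeSec A m.le_succ, ← whiskerLeft_comp,
    freeConnTo_freeι]

variable [∀ Y : C, PreservesColimitsOfShape (Discrete WalkingPair) (tensorRight Y)]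
  [∀ Y : C, PreservesColimitsOfShape ℕ (tensorLeft Y)]

noncomputable def freeMulRight (n : ℕ) : freeStage A n ⊗ freeUniverse A ⟶ freeUniverse A :=
  (isColimitOfPreserves (tensorLeft (freeStage A n)) (colimit.isColimit (freeChain A))).desc
    { pt := freeUniverse A
      ι :=
        { app := fun m => freeMulAux A n m ≫ freeι A (n + m)
          naturality := fun m m' f => by
            show (freeStage A n ◁ freeConnTo A (leOfHom f)) ≫ freeMulAux A n m' ≫
                freeι A (n + m') = (freeMulAux A n m ≫ freeι A (n + m)) ≫ 𝟙 (freeUniverse A)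
            rw [reassoc_of% whiskerLeft_freeConnTo_freeMulAux, freeConnTo_freeι,
              Category.comp_id] } }

theorem whiskerLeft_freeι_freeMulRight (n m : ℕ) :
    (freeStage A n ◁ freeι A m) ≫ freeMulRight A n = freeMulAux A n m ≫ freeι A (n + m) :=
  (isColimitOfPreserves (tensorLeft _) (colimit.isColimit _)).fac _ m

theorem freeConnTo_whiskerRight_freeMulRight {n n' : ℕ} (h : n ≤ n') :
    (freeConnTo A h ▷ freeUniverse A) ≫ freeMulRight A n' = freeMulRight A n := by
  refine (isColimitOfPreserves (tensorLeft (freeStage A n))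
    (colimit.isColimit (freeChain A))).hom_ext fun m => ?_
  change (freeStage A n ◁ freeι A m) ≫ _ = (freeStage A n ◁ freeι A m) ≫ _
  rw [whisker_exchange_assoc, whiskerLeft_freeι_freeMulRight, whiskerLeft_freeι_freeMulRight,
    reassoc_of% freeConnTo_whiskerRight_freeMulAux, freeConnTo_freeι]

theorem freeSecColim_freeMulRight :
    freeSecColim A ≫ freeMulRight A 1 = 𝟙 (freeUniverse A) := by
  refine colimit.hom_ext fun k => ?_
  change freeι A k ≫ _ = freeι A k ≫ _
  rw [reassoc_of% freeι_freeSecColim, whiskerLeft_freeι_freeMulRight,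
    reassoc_of% freeSec_freeMulAux, eqToHom_eq_freeConnTo A (Nat.add_comm k 1),
    freeConnTo_comp_assoc, freeConnTo_freeι, Category.comp_id]

variable [∀ Y : C, PreservesColimitsOfShape ℕ (tensorRight Y)]

noncomputable def freeMul : freeUniverse A ⊗ freeUniverse A ⟶ freeUniverse A :=
  (isColimitOfPreserves (tensorRight (freeUniverse A)) (colimit.isColimit (freeChain A))).desc
    { pt := freeUniverse A
      ι :=
        { app := freeMulRight A
          naturality := fun n n' f => by
            show (freeConnTo A (leOfHom f) ▷ freeUniverse A) ≫ freeMulRight A n' =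
              freeMulRight A n ≫ 𝟙 (freeUniverse A)
            rw [freeConnTo_whiskerRight_freeMulRight, Category.comp_id] } }

theorem freeι_whiskerRight_freeMul (n : ℕ) :
    (freeι A n ▷ freeUniverse A) ≫ freeMul A = freeMulRight A n :=
  (isColimitOfPreserves (tensorRight _) (colimit.isColimit _)).fac _ n

theorem freeι_tensorHom_freeMul (n m : ℕ) :
    (freeι A n ⊗ₘ freeι A m) ≫ freeMul A = freeMulAux A n m ≫ freeι A (n + m) := by
  rw [tensorHom_def', Category.assoc, freeι_whiskerRight_freeMul, whiskerLeft_freeι_freeMulRight]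

end Colimits

theorem canonical_section
    [HasFiniteCoproducts C] [HasFilteredColimitsOfSize.{0, 0} C]
    [∀ Y : C, PreservesColimitsOfShape (Discrete WalkingPair) (tensorRight Y)]
    [∀ Y : C, PreservesFilteredColimitsOfSize.{0, 0} (tensorRight Y)]
    [∀ Y : C, PreservesFilteredColimitsOfSize.{0, 0} (tensorLeft Y)] (A : C) :
    -- `μ_{1,m} ∘ s_{m+1} = 𝟙`
    (∀ m : ℕ, freeSec A m ≫ freeMulAux A 1 m =
      eqToHom (congrArg (freeStage A) (by omega : m + 1 = 1 + m))) ∧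
    -- compatibility with the connecting maps: `(1 ⊗ iₘ) ∘ s_{m+1} = s_{m+2} ∘ i_{m+1}`
    (∀ m : ℕ, freeConn A (m + 1) ≫ freeSec A (m + 1) =
      freeSec A m ≫ (freeStage A 1 ◁ freeConn A m)) ∧
    -- the colimit `s` of the `sₘ` is a section of `μ_{1,∞}`, and `ŝ = (i_{1,∞} ⊗ 𝟙) ∘ s`
    -- is a section of the free multiplication `μ`
    (∃ (μ : freeUniverse A ⊗ freeUniverse A ⟶ freeUniverse A)
        (μ₁ : freeStage A 1 ⊗ freeUniverse A ⟶ freeUniverse A)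
        (s : freeUniverse A ⟶ freeStage A 1 ⊗ freeUniverse A),
      (∀ n m, (freeι A n ⊗ₘ freeι A m) ≫ μ = freeMulAux A n m ≫ freeι A (n + m)) ∧
      (∀ m, (freeStage A 1 ◁ freeι A m) ≫ μ₁ = freeMulAux A 1 m ≫ freeι A (1 + m)) ∧
      (∀ m, freeι A (m + 1) ≫ s = freeSec A m ≫ (freeStage A 1 ◁ freeι A m)) ∧
      μ₁ = (freeι A 1 ▷ freeUniverse A) ≫ μ ∧
      s ≫ μ₁ = 𝟙 (freeUniverse A) ∧
      s ≫ (freeι A 1 ▷ freeUniverse A) ≫ μ = 𝟙 (freeUniverse A)) := by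
  have : ∀ Y : C, PreservesColimitsOfShape ℕ (tensorLeft Y) := fun _ =>
    PreservesFilteredColimitsOfSize.preserves_filtered_colimits ℕ
  have : ∀ Y : C, PreservesColimitsOfShape ℕ (tensorRight Y) := fun _ =>
    PreservesFilteredColimitsOfSize.preserves_filtered_colimits ℕ
  refine ⟨freeSec_freeMulAux A, fun m => ?_, freeMul A, freeMulRight A 1, freeSecColim A,
    freeι_tensorHom_freeMul A, whiskerLeft_freeι_freeMulRight A 1, freeι_succ_freeSecColim A,
    (freeι_whiskerRight_freeMul A 1).symm, freeSecColim_freeMulRight A, ?_⟩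
  · rw [freeConn_eq_freeConnTo, freeConn_eq_freeConnTo]
    exact freeConnTo_freeSec A m.le_succ
  · rw [freeι_whiskerRight_freeMul, freeSecColim_freeMulRight]
end

section
/- The total category Sig_a of signatures with amalgamation has all pullbacks and all small coproducts, and each fiber Sig_a(O) (signatures and morphisms over a fixed set O with identity base map) has all small filtered colimits. -/
open CategoryTheory

universe u

/-- A signature with amalgamation over the set of types `O`: every function symbol `a`
has an arity `ar a`, an output type `out a = ∂_a 0` and input types `inp a i = ∂_a (i+1)`. -/
structure Sig (O : Type u) : Type (u + 1) where
  sym : Type u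
  ar : sym → ℕ
  out : sym → O
  inp : (a : sym) → Fin (ar a) → O

/-- A morphism of signatures over a base map `u : O → Q`: a map of function symbols
together with amalgamation permutations, compatible with the typings. -/
structure SigHomOver {O Q : Type u} (u : O → Q) (A : Sig O) (B : Sig Q) : Type u where
  f : A.sym → B.sym
  perm : (a : A.sym) → Equiv.Perm (Fin (A.ar a))
  ar_eq : ∀ a, B.ar (f a) = A.ar a
  out_eq : ∀ a, B.out (f a) = u (A.out a)
  inp_eq : ∀ (a : A.sym) (i : Fin (A.ar a)),
    B.inp (f a) (Fin.cast (ar_eq a).symm (perm a i)) = u (A.inp a i)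

namespace SigHomOver

theorem ext' {O Q : Type u} {u : O → Q} {A : Sig O} {B : Sig Q}
    {F G : SigHomOver u A B} (h1 : F.f = G.f) (h2 : F.perm = G.perm) : F = G := by
  cases F; cases G; cases h1; cases h2; rfl

/-- The identity morphism. -/
def id' {O : Type u} (A : Sig O) : SigHomOver (fun o => o) A A where
  f := fun a => a
  perm := fun a => Equiv.refl _
  ar_eq := fun _ => rfl
  out_eq := fun _ => rfl
  inp_eq := fun _ _ => rfl

/-- Composition of morphisms of signatures. -/
def comp {O Q R : Type u} {u : O → Q} {v : Q → R} {A : Sig O} {B : Sig Q} {C : Sig R}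
    (F : SigHomOver u A B) (G : SigHomOver v B C) : SigHomOver (fun o => v (u o)) A C where
  f := fun a => G.f (F.f a)
  perm := fun a =>
    (F.perm a).trans ((finCongr (F.ar_eq a).symm).trans
      ((G.perm (F.f a)).trans (finCongr (F.ar_eq a))))
  ar_eq := fun a => (G.ar_eq (F.f a)).trans (F.ar_eq a)
  out_eq := fun a => by rw [G.out_eq, F.out_eq]
  inp_eq := fun a i => by
    have h1 := G.inp_eq (F.f a) (Fin.cast (F.ar_eq a).symm (F.perm a i))
    have h2 := F.inp_eq a i
    rw [← h2, ← h1]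
    exact congrArg (C.inp (G.f (F.f a))) (by ext; simp [finCongr])

/-- A morphism of signatures is strict if all its amalgamation permutations are
identities. -/
def Strict {O Q : Type u} {u : O → Q} {A : Sig O} {B : Sig Q} (F : SigHomOver u A B) : Prop :=
  ∀ a, F.perm a = Equiv.refl _

end SigHomOver

/-- The fiber category of signatures with amalgamation over the fixed set `O`. -/
instance sigCategory (O : Type u) : Category.{u} (Sig O) where
  Hom A B := SigHomOver (fun o => o) A B
  id A := SigHomOver.id' A
  comp F G := F.comp G
  id_comp F := by
    apply SigHomOver.ext'
    · rfl
    · funext a; ext i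
      simp [SigHomOver.comp, SigHomOver.id'] <;> rfl
  comp_id F := by
    apply SigHomOver.ext'
    · rfl
    · funext a; ext i
      simp [SigHomOver.comp, SigHomOver.id'] <;> rfl
  assoc F G H := by
    apply SigHomOver.ext'
    · rfl
    · funext a; ext i
      simp [SigHomOver.comp] <;> rfl

/-- The total category of signatures with amalgamation over varying sets of types. -/
structure SigTot : Type (u + 1) where
  base : Type u
  sig : Sig base

instance sigTotCategory : Category.{u} (SigTot.{u}) where
  Hom X Y := (u : X.base → Y.base) × SigHomOver u X.sig Y.sig
  id X := ⟨fun o => o, SigHomOver.id' X.sig⟩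
  comp F G := ⟨fun o => G.1 (F.1 o), F.2.comp G.2⟩
  id_comp F := by
    apply Sigma.ext
    · rfl
    · apply heq_of_eq
      apply SigHomOver.ext'
      · rfl
      · funext a; ext i; simp [SigHomOver.comp, SigHomOver.id'] <;> rfl
  comp_id F := by
    apply Sigma.ext
    · rfl
    · apply heq_of_eq
      apply SigHomOver.ext'
      · rfl
      · funext a; ext i; simp [SigHomOver.comp, SigHomOver.id'] <;> rfl
  assoc F G H := by
    apply Sigma.ext
    · rfl
    · apply heq_of_eq
      apply SigHomOver.ext'
      · rfl
      · funext a; ext i; simp [SigHomOver.comp] <;> rfl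

/-!
Pullbacks and coproducts are computed on types and on symbols separately, the amalgamation
permutations being carried along: a pullback pairs symbols with a common image and matches their
argument positions through that image, a coproduct is a disjoint union. In a filtered colimit in
`Sig O`, symbols that become equal at some stage are identified, and the induced identification of
their argument positions does not depend on the stage, since any two stages where they meet are
reconciled further along the diagram. Choosing a representative of each class of symbols then
types the colimit signature.
-/

open CategoryTheory.Limits

namespace SigHomOver

variable {O Q R : Type u} {u : O → Q} {v : Q → R} {A : Sig O} {B : Sig Q} {C : Sig R}

/-- The permutation `σ_a`, read as a bijection onto the argument positions of `f a`. -/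
def bij (F : SigHomOver u A B) (a : A.sym) : Fin (A.ar a) ≃ Fin (B.ar (F.f a)) :=
  (F.perm a).trans (finCongr (F.ar_eq a).symm)

theorem inp_bij (F : SigHomOver u A B) (a : A.sym) (i : Fin (A.ar a)) :
    B.inp (F.f a) (F.bij a i) = u (A.inp a i) :=
  F.inp_eq a i

theorem bij_val_congr (F : SigHomOver u A B) {a a' : A.sym} (h : a = a') {i : Fin (A.ar a)}
    {i' : Fin (A.ar a')} (hi : (i : ℕ) = i') : (F.bij a i : ℕ) = F.bij a' i' := by
  subst h
  rw [Fin.ext hi]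

theorem ext_bij {F G : SigHomOver u A B} (hf : ∀ a, F.f a = G.f a)
    (hb : ∀ a i, (F.bij a i : ℕ) = G.bij a i) : F = G :=
  ext' (funext hf) (funext fun a => Equiv.ext fun i => Fin.ext (hb a i))

theorem congr_f {F G : SigHomOver u A B} (h : F = G) (a : A.sym) : F.f a = G.f a :=
  h ▸ rfl

theorem congr_bij {F G : SigHomOver u A B} (h : F = G) (a : A.sym) (i : Fin (A.ar a)) :
    (F.bij a i : ℕ) = G.bij a i :=
  h ▸ rfl

def ofBij (f : A.sym → B.sym) (b : ∀ a, Fin (A.ar a) ≃ Fin (B.ar (f a)))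
    (out_eq : ∀ a, B.out (f a) = u (A.out a))
    (inp_eq : ∀ a i, B.inp (f a) (b a i) = u (A.inp a i)) : SigHomOver u A B where
  f := f
  perm a := (b a).trans (finCongr (Fin.equiv_iff_eq.mp ⟨b a⟩).symm)
  ar_eq a := (Fin.equiv_iff_eq.mp ⟨b a⟩).symm
  out_eq := out_eq
  inp_eq := inp_eq

end SigHomOver

namespace Sig

theorem inp_congr {O : Type u} (A : Sig O) {a a' : A.sym} (h : a = a') {i : Fin (A.ar a)}
    {i' : Fin (A.ar a')} (hi : (i : ℕ) = i') : A.inp a i = A.inp a' i' := by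
  subst h
  rw [Fin.ext hi]

variable {O : Type u} {A B C : Sig O}

@[simp]
theorem comp_f (F : A ⟶ B) (G : B ⟶ C) (a : A.sym) : (F ≫ G).f a = G.f (F.f a) :=
  rfl

theorem out_f (F : A ⟶ B) (a : A.sym) : B.out (F.f a) = A.out a :=
  F.out_eq a

theorem inp_bij (F : A ⟶ B) (a : A.sym) (i : Fin (A.ar a)) :
    B.inp (F.f a) (F.bij a i) = A.inp a i :=
  F.inp_eq a i

end Sig

namespace SigTot

variable {X Y Z W : SigTot.{u}}

theorem hom_ext {F G : X ⟶ Y} (h₁ : ∀ o, F.1 o = G.1 o) (h₂ : ∀ a, F.2.f a = G.2.f a)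
    (h₃ : ∀ a i, (F.2.bij a i : ℕ) = G.2.bij a i) : F = G := by
  obtain ⟨u, F⟩ := F
  obtain ⟨v, G⟩ := G
  obtain rfl : u = v := funext h₁
  exact congrArg (Sigma.mk u) (SigHomOver.ext_bij (F := F) (G := G) h₂ h₃)

theorem congr_base {F G : X ⟶ Y} (h : F = G) (o : X.base) : F.1 o = G.1 o :=
  h ▸ rfl

theorem congr_f {F G : X ⟶ Y} (h : F = G) (a : X.sig.sym) : F.2.f a = G.2.f a :=
  h ▸ rfl

theorem congr_bij {F G : X ⟶ Y} (h : F = G) (a : X.sig.sym) (i : Fin (X.sig.ar a)) :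
    (F.2.bij a i : ℕ) = G.2.bij a i :=
  h ▸ rfl

section Coproduct

variable {J : Type u} (X : J → SigTot.{u})

def sigma : SigTot.{u} where
  base := Σ j, (X j).base
  sig :=
    { sym := Σ j, (X j).sig.sym
      ar a := (X a.1).sig.ar a.2
      out a := ⟨a.1, (X a.1).sig.out a.2⟩
      inp a i := ⟨a.1, (X a.1).sig.inp a.2 i⟩ }

def sigmaCofan : Cofan X :=
  Cofan.mk (sigma X) fun j =>
    ⟨fun o => ⟨j, o⟩,
      SigHomOver.ofBij (fun a => ⟨j, a⟩) (fun _ => Equiv.refl _) (fun _ => rfl)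
        (fun _ _ => rfl)⟩

def sigmaDesc (t : Cofan X) : sigma X ⟶ t.pt :=
  ⟨fun o => (t.inj o.1).1 o.2,
    SigHomOver.ofBij (fun a => (t.inj a.1).2.f a.2) (fun a => (t.inj a.1).2.bij a.2)
      (fun a => (t.inj a.1).2.out_eq a.2) (fun a => (t.inj a.1).2.inp_bij a.2)⟩

def isColimitSigmaCofan : IsColimit (sigmaCofan X) :=
  Cofan.IsColimit.mk _ (sigmaDesc X)
    (fun _ _ => hom_ext (fun _ => rfl) (fun _ => rfl) (fun _ _ => rfl))
    (fun _ _ hm => hom_ext (fun o => congr_base (hm o.1) o.2) (fun a => congr_f (hm a.1) a.2)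
      (fun a => congr_bij (hm a.1) a.2))

end Coproduct

instance : HasCoproducts.{u} SigTot.{u} :=
  hasCoproducts_of_colimit_cofans sigmaCofan isColimitSigmaCofan

section Pullback

variable (F : X ⟶ Z) (G : Y ⟶ Z)

def pullbackMatch {a : X.sig.sym} {b : Y.sig.sym} (h : F.2.f a = G.2.f b) :
    Fin (X.sig.ar a) ≃ Fin (Y.sig.ar b) :=
  (F.2.bij a).trans ((finCongr (congrArg Z.sig.ar h)).trans (G.2.bij b).symm)

theorem bij_pullbackMatch {a : X.sig.sym} {b : Y.sig.sym} (h : F.2.f a = G.2.f b)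
    (i : Fin (X.sig.ar a)) : (G.2.bij b (pullbackMatch F G h i) : ℕ) = F.2.bij a i := by
  simp [pullbackMatch]

theorem inp_pullbackMatch {a : X.sig.sym} {b : Y.sig.sym} (h : F.2.f a = G.2.f b)
    (i : Fin (X.sig.ar a)) :
    G.1 (Y.sig.inp b (pullbackMatch F G h i)) = F.1 (X.sig.inp a i) := by
  rw [← G.2.inp_bij, ← F.2.inp_bij]
  exact Z.sig.inp_congr h.symm (bij_pullbackMatch F G h i)

def pullbackObj : SigTot.{u} where
  base := {p : X.base × Y.base // F.1 p.1 = G.1 p.2}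
  sig :=
    { sym := {p : X.sig.sym × Y.sig.sym // F.2.f p.1 = G.2.f p.2}
      ar p := X.sig.ar p.1.1
      out p := ⟨(X.sig.out p.1.1, Y.sig.out p.1.2),
        (F.2.out_eq p.1.1).symm.trans (p.2 ▸ G.2.out_eq p.1.2)⟩
      inp p i := ⟨(X.sig.inp p.1.1 i, Y.sig.inp p.1.2 (pullbackMatch F G p.2 i)),
        (inp_pullbackMatch F G p.2 i).symm⟩ }

def pullbackFst : pullbackObj F G ⟶ X :=
  ⟨fun o => o.1.1,
    SigHomOver.ofBij (fun p => p.1.1) (fun _ => Equiv.refl _) (fun _ => rfl) (fun _ _ => rfl)⟩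

def pullbackSnd : pullbackObj F G ⟶ Y :=
  ⟨fun o => o.1.2,
    SigHomOver.ofBij (fun p => p.1.2) (fun p => pullbackMatch F G p.2) (fun _ => rfl)
      (fun _ _ => rfl)⟩

theorem pullback_condition : pullbackFst F G ≫ F = pullbackSnd F G ≫ G :=
  hom_ext (fun o => o.2) (fun p => p.2) (fun p i => (bij_pullbackMatch F G p.2 i).symm)

variable {F G}

theorem pullbackMatch_lift {r : W ⟶ X} {s : W ⟶ Y} (hc : r ≫ F = s ≫ G) (w : W.sig.sym)
    (h : F.2.f (r.2.f w) = G.2.f (s.2.f w)) (i : Fin (W.sig.ar w)) :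
    pullbackMatch F G h (r.2.bij w i) = s.2.bij w i := by
  apply (G.2.bij (s.2.f w)).injective
  apply Fin.ext
  rw [bij_pullbackMatch]
  exact congr_bij hc w i

def pullbackLift {r : W ⟶ X} {s : W ⟶ Y} (hc : r ≫ F = s ≫ G) : W ⟶ pullbackObj F G :=
  ⟨fun o => ⟨(r.1 o, s.1 o), congr_base hc o⟩,
    SigHomOver.ofBij (fun w => ⟨(r.2.f w, s.2.f w), congr_f hc w⟩) (fun w => r.2.bij w)
      (fun w => Subtype.ext (Prod.ext (r.2.out_eq w) (s.2.out_eq w)))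
      (fun w i => Subtype.ext (Prod.ext (r.2.inp_bij w i) (by
        change Y.sig.inp (s.2.f w) (pullbackMatch F G _ (r.2.bij w i)) = s.1 (W.sig.inp w i)
        rw [pullbackMatch_lift hc, s.2.inp_bij])))⟩

variable (F G)

def pullbackCone : PullbackCone F G :=
  PullbackCone.mk (pullbackFst F G) (pullbackSnd F G) (pullback_condition F G)

def isLimitPullbackCone : IsLimit (pullbackCone F G) :=
  PullbackCone.IsLimit.mk (pullback_condition F G) (fun c => pullbackLift c.condition)
    (fun _ => hom_ext (fun _ => rfl) (fun _ => rfl) (fun _ _ => rfl))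
    (fun c => hom_ext (fun _ => rfl) (fun _ => rfl)
      (fun w i => congrArg Fin.val (pullbackMatch_lift c.condition w (congr_f c.condition w) i)))
    (fun _ _ h₁ h₂ => hom_ext
      (fun o => Subtype.ext (Prod.ext (congr_base h₁ o) (congr_base h₂ o)))
      (fun w => Subtype.ext (Prod.ext (congr_f h₁ w) (congr_f h₂ w)))
      (fun w i => congr_bij h₁ w i))

instance : HasPullback F G :=
  HasLimit.mk ⟨_, isLimitPullbackCone F G⟩

end Pullback

instance : HasPullbacks SigTot.{u} :=
  hasPullbacks_of_hasLimit_cospan _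

end SigTot

namespace Sig.FilteredColimit

variable {O : Type u} {J : Type u} [Category.{u} J] (F : J ⥤ Sig.{u} O)

abbrev El : Type u := Σ j, (F.obj j).sym

abbrev arity (e : El F) : ℕ := (F.obj e.1).ar e.2

/-- The symbols `e` and `e'` become equal at the stage `l`, and `σ` is the identification of
their argument positions read off there. -/
def LinkedAt (e e' : El F) (σ : Fin (arity F e) ≃ Fin (arity F e')) {l : J} (φ : e.1 ⟶ l)
    (ψ : e'.1 ⟶ l) : Prop :=
  (F.map φ).f e.2 = (F.map ψ).f e'.2 ∧
    ∀ i, ((F.map ψ).bij e'.2 (σ i) : ℕ) = (F.map φ).bij e.2 i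

def Linked (e e' : El F) (σ : Fin (arity F e) ≃ Fin (arity F e')) : Prop :=
  ∃ (l : J) (φ : e.1 ⟶ l) (ψ : e'.1 ⟶ l), LinkedAt F e e' σ φ ψ

variable {F} {e e' e'' : El F}

theorem LinkedAt.comp {σ : Fin (arity F e) ≃ Fin (arity F e')} {l l' : J} {φ : e.1 ⟶ l}
    {ψ : e'.1 ⟶ l} (h : LinkedAt F e e' σ φ ψ) (γ : l ⟶ l') :
    LinkedAt F e e' σ (φ ≫ γ) (ψ ≫ γ) := by
  obtain ⟨hf, hb⟩ := h
  refine ⟨by simp [hf], fun i => ?_⟩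
  rw [F.map_comp, F.map_comp]
  exact (F.map γ).bij_val_congr hf.symm (hb i)

theorem Linked.refl (e : El F) : Linked F e e (Equiv.refl _) :=
  ⟨e.1, 𝟙 e.1, 𝟙 e.1, rfl, fun _ => rfl⟩

theorem Linked.symm {σ : Fin (arity F e) ≃ Fin (arity F e')} (h : Linked F e e' σ) :
    Linked F e' e σ.symm := by
  obtain ⟨l, φ, ψ, hf, hb⟩ := h
  refine ⟨l, ψ, φ, hf.symm, fun i => ?_⟩
  simpa using (hb (σ.symm i)).symm

theorem Linked.trans [IsFilteredOrEmpty J] {σ : Fin (arity F e) ≃ Fin (arity F e')}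
    {τ : Fin (arity F e') ≃ Fin (arity F e'')} (h : Linked F e e' σ) (h' : Linked F e' e'' τ) :
    Linked F e e'' (σ.trans τ) := by
  obtain ⟨l, φ, ψ, h⟩ := h
  obtain ⟨l', φ', ψ', h'⟩ := h'
  obtain ⟨m, α, β, hαβ⟩ := IsFiltered.span ψ φ'
  obtain ⟨hf, hb⟩ := h.comp α
  obtain ⟨hf', hb'⟩ := h'.comp β
  refine ⟨m, φ ≫ α, ψ' ≫ β, by rw [hf, hαβ, hf'], fun i => ?_⟩
  rw [Equiv.trans_apply, hb', ← hαβ, hb]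

theorem linked_map {j k : J} (φ : j ⟶ k) (x : (F.obj j).sym) :
    Linked F ⟨j, x⟩ ⟨k, (F.map φ).f x⟩ ((F.map φ).bij x) :=
  ⟨k, φ, 𝟙 k, by rw [F.map_id]; rfl, fun _ => by rw [F.map_id]; rfl⟩

theorem Linked.unique [IsFilteredOrEmpty J] {σ τ : Fin (arity F e) ≃ Fin (arity F e')}
    (h : Linked F e e' σ) (h' : Linked F e e' τ) : σ = τ := by
  obtain ⟨l, φ, ψ, h⟩ := h
  obtain ⟨l', φ', ψ', h'⟩ := h'
  obtain ⟨s, α, β, hφ, hψ⟩ := IsFiltered.bowtie φ φ' ψ ψ'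
  obtain ⟨-, hb⟩ := h.comp α
  obtain ⟨-, hb'⟩ := h'.comp β
  rw [← hφ, ← hψ] at hb'
  exact Equiv.ext fun i =>
    ((F.map (ψ ≫ α)).bij e'.2).injective (Fin.ext ((hb i).trans (hb' i).symm))

theorem Linked.val_eq [IsFilteredOrEmpty J] {σ : Fin (arity F e) ≃ Fin (arity F e')}
    {τ : Fin (arity F e) ≃ Fin (arity F e'')} (h : Linked F e e' σ) (h' : Linked F e e'' τ)
    (he : e' = e'') (i : Fin (arity F e)) : (σ i : ℕ) = τ i := by
  subst he
  rw [h.unique h']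

theorem Linked.out_eq {σ : Fin (arity F e) ≃ Fin (arity F e')} (h : Linked F e e' σ) :
    (F.obj e'.1).out e'.2 = (F.obj e.1).out e.2 := by
  obtain ⟨l, φ, ψ, hf, -⟩ := h
  rw [← out_f (F.map ψ) e'.2, ← hf, out_f]

theorem Linked.inp_eq {σ : Fin (arity F e) ≃ Fin (arity F e')} (h : Linked F e e' σ)
    (i : Fin (arity F e)) : (F.obj e'.1).inp e'.2 (σ i) = (F.obj e.1).inp e.2 i := by
  obtain ⟨l, φ, ψ, hf, hb⟩ := h
  rw [← inp_bij (F.map ψ) e'.2, ← inp_bij (F.map φ) e.2]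
  exact (F.obj l).inp_congr hf.symm (hb i)

theorem Linked.cocone_f {σ : Fin (arity F e) ≃ Fin (arity F e')} (h : Linked F e e' σ)
    (t : Cocone F) : (t.ι.app e'.1).f e'.2 = (t.ι.app e.1).f e.2 := by
  obtain ⟨l, φ, ψ, hf, -⟩ := h
  rw [← t.w ψ, ← t.w φ, comp_f, comp_f, hf]

theorem Linked.cocone_bij {σ : Fin (arity F e) ≃ Fin (arity F e')} (h : Linked F e e' σ)
    (t : Cocone F) (i : Fin (arity F e)) :
    ((t.ι.app e'.1).bij e'.2 (σ i) : ℕ) = (t.ι.app e.1).bij e.2 i := by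
  obtain ⟨l, φ, ψ, hf, hb⟩ := h
  rw [← t.w ψ, ← t.w φ]
  exact (t.ι.app l).bij_val_congr hf.symm (hb i)

variable (F) [IsFilteredOrEmpty J]

theorem linked_equivalence : Equivalence fun e e' : El F => ∃ σ, Linked F e e' σ :=
  ⟨fun e => ⟨_, .refl e⟩, fun ⟨_, h⟩ => ⟨_, h.symm⟩,
    fun ⟨_, h⟩ ⟨_, h'⟩ => ⟨_, h.trans h'⟩⟩

abbrev Sym : Type u := Quot fun e e' : El F => ∃ σ, Linked F e e' σ

noncomputable section

def rep (c : Sym F) : El F := c.out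

theorem exists_linked_rep (e : El F) : ∃ σ, Linked F e (rep F (Quot.mk _ e)) σ :=
  (linked_equivalence F).eqvGen_iff.mp (Quot.eqvGen_exact (Quot.out_eq _).symm)

def link (e : El F) : Fin (arity F e) ≃ Fin (arity F (rep F (Quot.mk _ e))) :=
  (exists_linked_rep F e).choose

theorem linked_link (e : El F) : Linked F e (rep F (Quot.mk _ e)) (link F e) :=
  (exists_linked_rep F e).choose_spec

/-- The colimit signature: a symbol is a class of linked symbols of the diagram, typed as its
chosen representative. -/
def colimit : Sig O where
  sym := Sym F
  ar c := arity F (rep F c)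
  out c := (F.obj (rep F c).1).out (rep F c).2
  inp c := (F.obj (rep F c).1).inp (rep F c).2

def ι (j : J) : F.obj j ⟶ colimit F :=
  SigHomOver.ofBij (fun x => Quot.mk _ ⟨j, x⟩) (fun x => link F ⟨j, x⟩)
    (fun x => (linked_link F ⟨j, x⟩).out_eq) (fun x => (linked_link F ⟨j, x⟩).inp_eq)

theorem ι_naturality {j k : J} (φ : j ⟶ k) : F.map φ ≫ ι F k = ι F j := by
  have hq : ∀ x, (Quot.mk _ ⟨k, (F.map φ).f x⟩ : Sym F) = Quot.mk _ ⟨j, x⟩ :=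
    fun x => (Quot.sound ⟨_, linked_map φ x⟩).symm
  refine SigHomOver.ext_bij hq fun x i => ?_
  exact ((linked_map φ x).trans (linked_link F _)).val_eq (linked_link F _)
    (congrArg (rep F) (hq x)) i

def cocone : Cocone F where
  pt := colimit F
  ι :=
    { app := ι F
      naturality := fun _ _ φ => (ι_naturality F φ).trans (Category.comp_id _).symm }

def desc (t : Cocone F) : colimit F ⟶ t.pt :=
  SigHomOver.ofBij (fun c => (t.ι.app (rep F c).1).f (rep F c).2)
    (fun c => (t.ι.app (rep F c).1).bij (rep F c).2)
    (fun c => out_f (t.ι.app (rep F c).1) (rep F c).2)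
    (fun c => inp_bij (t.ι.app (rep F c).1) (rep F c).2)

theorem ι_desc (t : Cocone F) (j : J) : ι F j ≫ desc F t = t.ι.app j :=
  SigHomOver.ext_bij (fun x => (linked_link F ⟨j, x⟩).cocone_f t)
    (fun x => (linked_link F ⟨j, x⟩).cocone_bij t)

theorem hom_ext {B : Sig O} {m m' : colimit F ⟶ B} (h : ∀ j, ι F j ≫ m = ι F j ≫ m') :
    m = m' := by
  refine SigHomOver.ext_bij (fun c => ?_) (fun c => ?_) <;> induction c using Quot.ind with
  | mk e => ?_
  · exact SigHomOver.congr_f (h e.1) e.2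
  · intro i
    obtain ⟨i, rfl⟩ := (link F e).surjective i
    exact SigHomOver.congr_bij (h e.1) e.2 i

def isColimit : IsColimit (cocone F) where
  desc := desc F
  fac := ι_desc F
  uniq t _ hm := hom_ext F fun j => (hm j).trans (ι_desc F t j).symm

end

end Sig.FilteredColimit

instance {O : Type u} {J : Type u} [Category.{u} J] [IsFilteredOrEmpty J] :
    HasColimitsOfShape J (Sig.{u} O) :=
  ⟨fun F => HasColimit.mk ⟨_, Sig.FilteredColimit.isColimit F⟩⟩

theorem sig_cocompleteness :
    HasPullbacks (SigTot.{u}) ∧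
      HasCoproducts.{u} (SigTot.{u}) ∧
      ∀ O : Type u, HasFilteredColimitsOfSize.{u, u} (Sig.{u} O) :=
  ⟨inferInstance, inferInstance, fun _ => ⟨fun _ _ _ => inferInstance⟩⟩
end
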